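/- Let c, α₁, ψ₀ be real constants with c ≠ 0 and set C(t) = e^{ψ₀t}. On ℝ⁴ with coordinates (t,x,y,z), define the Bianchi I metric g = diag(−C(t)², C(t)²e^{−2t/c}, C(t)²e^{−2α₁t/c}, C(t)²). Then the vector field X₁ = (c, x, α₁y, 0) is a homothetic Killing vector of g: it satisfies the conformal Killing equation Σ_λ [ξ^λ ∂_λ g_{μν} + g_{λν} ∂_μ ξ^λ + g_{μλ} ∂_ν ξ^λ] = 2ψ g_{μν} with the constant conformal factor ψ = c·ψ₀. -/

import Mathlib

/-!
Every diagonal entry of the metric has the form `σᵢ e^{mᵢ t}`, with `mᵢ = 2ψ₀` from the common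
factor `C(t)²` plus the anisotropic exponent `-2kᵢ/c`. For `ξ = c ∂_t + Σ kᵢ xⁱ ∂ᵢ` the
off-diagonal equations vanish and the `(i, i)` equation reduces to `c mᵢ + 2kᵢ = 2ψ`. With
`k = (0, 1, α₁, 0)` the scaling `kᵢ xⁱ` cancels the anisotropy exactly, leaving `ψ = c ψ₀`.
-/

noncomputable section

/-- Partial derivative of `f` in the `μ`-th coordinate direction at `p`. -/
def pd (μ : Fin 4) (f : (Fin 4 → ℝ) → ℝ) (p : Fin 4 → ℝ) : ℝ :=
  fderiv ℝ f p (Pi.single μ 1)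

/-- `ξ` is a conformal Killing vector of the metric `g` with conformal factor `ψ`. -/
def IsCKV (g : (Fin 4 → ℝ) → Matrix (Fin 4) (Fin 4) ℝ)
    (ξ : (Fin 4 → ℝ) → Fin 4 → ℝ) (ψ : (Fin 4 → ℝ) → ℝ) : Prop :=
  ∀ (μ ν : Fin 4) (p : Fin 4 → ℝ),
    (∑ l : Fin 4, (ξ p l * pd l (fun q => g q μ ν) p
      + g p l ν * pd μ (fun q => ξ q l) p
      + g p μ l * pd ν (fun q => ξ q l) p)) = 2 * ψ p * g p μ ν

/-- `ξ` is a Killing vector of the metric `g`. -/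
def IsKV (g : (Fin 4 → ℝ) → Matrix (Fin 4) (Fin 4) ℝ)
    (ξ : (Fin 4 → ℝ) → Fin 4 → ℝ) : Prop :=
  ∀ (μ ν : Fin 4) (p : Fin 4 → ℝ),
    (∑ l : Fin 4, (ξ p l * pd l (fun q => g q μ ν) p
      + g p l ν * pd μ (fun q => ξ q l) p
      + g p μ l * pd ν (fun q => ξ q l) p)) = 0

lemma pd_const (μ : Fin 4) (a : ℝ) (p : Fin 4 → ℝ) : pd μ (fun _ => a) p = 0 := by
  simp [pd]

lemma pd_comp_apply (μ i : Fin 4) {f : ℝ → ℝ} {f' : ℝ} {p : Fin 4 → ℝ}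
    (h : HasDerivAt f f' (p i)) :
    pd μ (fun q => f (q i)) p = if i = μ then f' else 0 := by
  have hcomp : HasFDerivAt (fun q : Fin 4 → ℝ => f (q i)) _ p :=
    h.hasFDerivAt.comp p (hasFDerivAt_apply i p)
  rw [pd, hcomp.fderiv]
  simp [Pi.single_apply]

lemma pd_const_add_mul_apply (μ i : Fin 4) (b k : ℝ) (p : Fin 4 → ℝ) :
    pd μ (fun q => b + k * q i) p = if i = μ then k else 0 := by
  simpa using pd_comp_apply μ i (((hasDerivAt_id (p i)).const_mul k).const_add b)

theorem isCKV_diagonal_of_affine (a a' : Fin 4 → ℝ → ℝ)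
    (ha : ∀ i t, HasDerivAt (a i) (a' i t) t) (b k : Fin 4 → ℝ) (ψ : (Fin 4 → ℝ) → ℝ)
    (h : ∀ i p, (b 0 + k 0 * p 0) * a' i (p 0) + 2 * k i * a i (p 0) = 2 * ψ p * a i (p 0)) :
    IsCKV (fun p => Matrix.diagonal fun i => a i (p 0)) (fun p l => b l + k l * p l) ψ := by
  intro μ ν p
  simp only [pd_const_add_mul_apply]
  by_cases hμν : μ = ν
  · subst hμν
    simp only [Matrix.diagonal_apply_eq, pd_comp_apply _ 0 (ha μ (p 0)), Matrix.diagonal_apply,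
      mul_ite, ite_mul, mul_zero, zero_mul, Finset.sum_add_distrib, Finset.sum_ite_eq,
      Finset.sum_ite_eq', Finset.mem_univ, if_true]
    linear_combination h μ p
  · simp only [Matrix.diagonal_apply_ne _ hμν, pd_const, mul_zero, zero_add, Matrix.diagonal_apply]
    exact Finset.sum_eq_zero fun l _ => by grind

theorem isCKV_diagonal_exp (σ m b k : Fin 4 → ℝ) (ψ : ℝ) (hk : k 0 = 0)
    (h : ∀ i, b 0 * m i + 2 * k i = 2 * ψ) :
    IsCKV (fun p => Matrix.diagonal fun i => σ i * Real.exp (m i * p 0))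
      (fun p l => b l + k l * p l) (fun _ => ψ) := by
  refine isCKV_diagonal_of_affine (fun i t => σ i * Real.exp (m i * t))
    (fun i t => m i * (σ i * Real.exp (m i * t))) (fun i t => ?_) b k _ (fun i p => ?_)
  · exact ((((hasDerivAt_id' t).const_mul (m i)).exp).const_mul (σ i)).congr_deriv (by ring)
  · rw [hk]
    linear_combination σ i * Real.exp (m i * p 0) * h i

/-- with `C(t) = e^{ψ₀ t}`, the vector field `X₁ = c∂_t + x∂_x + α₁ y∂_y`
is a homothetic Killing vector of the Bianchi I metric with constant conformal factor
`ψ = c ψ₀`. -/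
theorem bianchiI_X1_is_HV (c α₁ ψ₀ : ℝ) (hc : c ≠ 0)
    (C : ℝ → ℝ) (hC : C = fun t => Real.exp (ψ₀ * t))
    (g : (Fin 4 → ℝ) → Matrix (Fin 4) (Fin 4) ℝ)
    (hg : g = fun p => Matrix.diagonal
      ![-(C (p 0)) ^ 2,
        (C (p 0)) ^ 2 * Real.exp (-2 * p 0 / c),
        (C (p 0)) ^ 2 * Real.exp (-2 * α₁ * p 0 / c),
        (C (p 0)) ^ 2])
    (ξ : (Fin 4 → ℝ) → Fin 4 → ℝ)
    (hξ : ξ = fun p => ![c, p 1, α₁ * p 2, 0]) :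
    IsCKV g ξ (fun _ => c * ψ₀) := by
  subst hC hg hξ
  convert isCKV_diagonal_exp ![-1, 1, 1, 1] ![2 * ψ₀, 2 * ψ₀ - 2 / c, 2 * ψ₀ - 2 * α₁ / c, 2 * ψ₀]
    ![c, 0, 0, 0] ![0, 1, α₁, 0] (c * ψ₀) rfl ?_ using 2
  · congr 1
    funext i
    fin_cases i <;> simp [sq, ← Real.exp_add] <;> ring
  · funext l
    fin_cases l <;> simp
  · intro i
    fin_cases i <;> simp <;> field_simp <;> ring
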